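/- Let ι be a finite nonempty type, α ∈ [0, 1), δ ≥ 0, Ω ≥ 1, and let (p_r) be strictly positive probability distributions on ι such that KL(p_r ‖ p_{r−1}) ≤ δ for all r ∈ {t−Ω+1, …, t}, and TV(p_{r+1}, p_r) ≤ α·TV(p_r, p_{r−1}) for all r ≥ t. Let i ∈ ι be a strict maximizer of p_t with top-2 margin m = p_t(i) − max_{j ≠ i} p_t(j). If Ω·√(δ/2) + (1/(1 − α))·√(δ/2) < m/2, then i is the unique maximizer of p_{t+s} for every s ≥ 0. -/

import Mathlib

/-- A probability distribution on a finite type: nonnegative and sums to 1. -/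
def IsProbDist {ι : Type*} [Fintype ι] (p : ι → ℝ) : Prop :=
  (∀ i, 0 ≤ p i) ∧ ∑ i, p i = 1

/-- Total variation distance between two functions on a finite type. -/
noncomputable def TV {ι : Type*} [Fintype ι] (p q : ι → ℝ) : ℝ :=
  (1 / 2) * ∑ i, |p i - q i|

/-- Kullback–Leibler divergence on a finite type (terms with `p i = 0` contribute `0`,
since `Real.log 0 = 0`). -/
noncomputable def KL {ι : Type*} [Fintype ι] (p q : ι → ℝ) : ℝ :=
  ∑ i, p i * Real.log (p i / q i)

/-!
Pinsker's inequality bounds the last step `TV (p t) (p (t - 1))` by `√(δ / 2)`. Under the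
contraction the later steps decay geometrically, so `p (t + s)` stays within total variation
`α / (1 - α) · √(δ / 2)` of `p t`. Moving in total variation by `ε` lowers the gap between two
coordinates by at most `2 ε`, which is less than the margin.

Pinsker's inequality itself follows from Cauchy–Schwarz with weights `(p i + 2 q i) / 3` and the
pointwise bound `3 (x - 1)² / (2 (x + 2)) ≤ x log x - x + 1`.
-/

open Finset InformationTheory Real

theorem isMinOn_of_hasDerivAt {D : Set ℝ} (hD : D.OrdConnected) {f f' : ℝ → ℝ} {c : ℝ}
    (hc : c ∈ D) (hf : ∀ x ∈ D, HasDerivAt f (f' x) x)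
    (hleft : ∀ x ∈ D, x < c → f' x ≤ 0) (hright : ∀ x ∈ D, c < x → 0 ≤ f' x) :
    IsMinOn f D c := by
  intro x hx
  rcases le_total c x with hcx | hxc
  · have hsub : Set.Icc c x ⊆ D := hD.out hc hx
    have hmono : MonotoneOn f (Set.Icc c x) :=
      monotoneOn_of_hasDerivWithinAt_nonneg (convex_Icc c x)
        (fun y hy ↦ (hf y (hsub hy)).continuousAt.continuousWithinAt)
        (fun y hy ↦ (hf y (hsub (interior_subset hy))).hasDerivWithinAt)
        (fun y hy ↦ by
          rw [interior_Icc] at hy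
          exact hright y (hsub (Set.Ioo_subset_Icc_self hy)) hy.1)
    exact hmono ⟨le_rfl, hcx⟩ ⟨hcx, le_rfl⟩ hcx
  · have hsub : Set.Icc x c ⊆ D := hD.out hx hc
    have hanti : AntitoneOn f (Set.Icc x c) :=
      antitoneOn_of_hasDerivWithinAt_nonpos (convex_Icc x c)
        (fun y hy ↦ (hf y (hsub hy)).continuousAt.continuousWithinAt)
        (fun y hy ↦ (hf y (hsub (interior_subset hy))).hasDerivWithinAt)
        (fun y hy ↦ by
          rw [interior_Icc] at hy
          exact hleft y (hsub (Set.Ioo_subset_Icc_self hy)) hy.2)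
    exact hanti ⟨le_rfl, hxc⟩ ⟨hxc, le_rfl⟩ hxc

theorem Real.two_mul_sub_one_div_add_one_le_log {x : ℝ} (hx : 1 ≤ x) :
    2 * (x - 1) / (x + 1) ≤ log x := by
  have h := sum_range_le_log_div (x := (x - 1) / (x + 1)) (by positivity)
    ((div_lt_one (by linarith)).2 (by linarith)) 1
  have hx' : (1 + (x - 1) / (x + 1)) / (1 - (x - 1) / (x + 1)) = x := by
    field_simp
    ring
  rw [hx'] at h
  simp only [range_one, sum_singleton] at h
  norm_num at h
  rw [mul_div_assoc]
  linarith

theorem Real.log_le_two_mul_sub_one_div_add_one {x : ℝ} (hx₀ : 0 < x) (hx : x ≤ 1) :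
    log x ≤ 2 * (x - 1) / (x + 1) := by
  have h := two_mul_sub_one_div_add_one_le_log (one_le_inv_iff₀.2 ⟨hx₀, hx⟩)
  rw [log_inv] at h
  have hx' : 2 * (x⁻¹ - 1) / (x⁻¹ + 1) = -(2 * (x - 1) / (x + 1)) := by
    field_simp
    ring
  linarith

theorem InformationTheory.three_mul_sq_sub_one_div_le_klFun {x : ℝ} (hx : 0 ≤ x) :
    3 * (x - 1) ^ 2 / (2 * (x + 2)) ≤ klFun x := by
  rcases hx.eq_or_lt with rfl | hx
  · norm_num [klFun_zero]
  set φ : ℝ → ℝ := fun x ↦ 3 * (x - 1) ^ 2 / (2 * (x + 2))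
  have hφ : ∀ y, 0 < y → HasDerivAt φ (3 * (y - 1) * (y + 5) / (2 * (y + 2) ^ 2)) y := by
    intro y hy
    have hnum : HasDerivAt (fun y : ℝ ↦ 3 * (y - 1) ^ 2) (3 * (2 * (y - 1))) y := by
      simpa using (((hasDerivAt_id' y).sub_const 1).fun_pow 2).const_mul 3
    have hden : HasDerivAt (fun y : ℝ ↦ 2 * (y + 2)) 2 y := by
      simpa using ((hasDerivAt_id' y).add_const 2).const_mul 2
    refine (hnum.div hden (by positivity)).congr_deriv ?_
    field_simp
    ring
  -- both summands have the sign of `y - 1`, hence so does the derivative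
  have hsplit : ∀ y, 0 < y → log y - 3 * (y - 1) * (y + 5) / (2 * (y + 2) ^ 2) =
      (log y - 2 * (y - 1) / (y + 1)) + (y - 1) ^ 3 / (2 * (y + 1) * (y + 2) ^ 2) := by
    intro y hy
    field_simp
    ring
  have hmin : IsMinOn (fun y ↦ klFun y - φ y) (Set.Ioi 0) 1 := by
    refine isMinOn_of_hasDerivAt Set.ordConnected_Ioi (Set.mem_Ioi.2 one_pos)
      (fun y hy ↦ (hasDerivAt_klFun (ne_of_gt hy)).sub (hφ y hy)) ?_ ?_
    · intro y (hy : 0 < y) hy1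
      rw [hsplit y hy]
      have hlog := log_le_two_mul_sub_one_div_add_one hy hy1.le
      have hcube : (y - 1) ^ 3 / (2 * (y + 1) * (y + 2) ^ 2) ≤ 0 :=
        div_nonpos_of_nonpos_of_nonneg (Odd.pow_nonpos (by decide) (by linarith)) (by positivity)
      linarith
    · intro y (hy : 0 < y) hy1
      rw [hsplit y hy]
      have hlog := two_mul_sub_one_div_add_one_le_log hy1.le
      have hcube : 0 ≤ (y - 1) ^ 3 / (2 * (y + 1) * (y + 2) ^ 2) :=
        div_nonneg (pow_nonneg (by linarith) 3) (by positivity)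
      linarith
  simpa [klFun_one, φ] using hmin (Set.mem_Ioi.2 hx)

theorem three_mul_sq_sub_div_le_mul_log_div {x y : ℝ} (hx : 0 ≤ x) (hy : 0 < y) :
    3 * (x - y) ^ 2 / (2 * (x + 2 * y)) ≤ x * log (x / y) - x + y := by
  have h := mul_le_mul_of_nonneg_left (three_mul_sq_sub_one_div_le_klFun (div_nonneg hx hy.le))
    hy.le
  have hlhs : y * (3 * (x / y - 1) ^ 2 / (2 * (x / y + 2))) =
      3 * (x - y) ^ 2 / (2 * (x + 2 * y)) := by
    field_simp
  have hrhs : y * klFun (x / y) = x * log (x / y) - x + y := by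
    rw [klFun_apply]
    field_simp
    ring
  rwa [hlhs, hrhs] at h

section TotalVariation

variable {ι : Type*} [Fintype ι]

theorem TV_nonneg (p q : ι → ℝ) : 0 ≤ TV p q :=
  mul_nonneg (by norm_num) (sum_nonneg fun i _ ↦ abs_nonneg _)

theorem TV_self (p : ι → ℝ) : TV p p = 0 := by
  simp [TV]

theorem TV_triangle (p q r : ι → ℝ) : TV p r ≤ TV p q + TV q r := by
  rw [TV, TV, TV, ← mul_add, ← sum_add_distrib]
  gcongr with i
  exact abs_sub_le _ _ _

theorem TV_le_sum_range (q : ℕ → ι → ℝ) (s : ℕ) :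
    TV (q s) (q 0) ≤ ∑ k ∈ range s, TV (q (k + 1)) (q k) := by
  induction s with
  | zero => simp [TV_self]
  | succ s ih =>
    rw [sum_range_succ]
    linarith [TV_triangle (q (s + 1)) (q s) (q 0)]

theorem abs_sub_add_abs_sub_le_two_mul_TV (p q : ι → ℝ) {i j : ι} (hij : i ≠ j) :
    |p i - q i| + |p j - q j| ≤ 2 * TV p q := by
  classical
  have h := sum_le_sum_of_subset_of_nonneg (subset_univ {i, j})
    fun k _ _ ↦ abs_nonneg (p k - q k)
  rw [sum_pair hij] at h
  rw [TV]
  linarith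

theorem apply_lt_apply_of_two_mul_TV_lt {p q : ι → ℝ} {i j : ι} (hji : j ≠ i)
    (h : 2 * TV q p < p i - p j) : q j < q i := by
  have hpair := abs_sub_add_abs_sub_le_two_mul_TV q p hji.symm
  have hi : p i - q i ≤ |q i - p i| := by rw [abs_sub_comm]; exact le_abs_self _
  have hj : q j - p j ≤ |q j - p j| := le_abs_self _
  linarith

theorem TV_sq_le_half_KL {p q : ι → ℝ} (hp : IsProbDist p) (hq : IsProbDist q)
    (hq₀ : ∀ i, 0 < q i) : TV p q ^ 2 ≤ KL p q / 2 := by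
  set w : ι → ℝ := fun i ↦ (p i + 2 * q i) / 3
  have hw : ∀ i ∈ univ, 0 < w i := fun i _ ↦ by
    have := hp.1 i
    have := hq₀ i
    positivity
  have hsum_w : ∑ i, w i = 1 := by
    simp only [w, ← sum_div, sum_add_distrib, ← mul_sum, hp.2, hq.2]
    norm_num
  have hterm : ∀ i ∈ univ, |p i - q i| ^ 2 / w i ≤ 2 * (p i * log (p i / q i) - p i + q i) := by
    intro i _
    have hpq : p i + 2 * q i ≠ 0 := by
      have := hp.1 i
      have := hq₀ i
      positivity
    calc |p i - q i| ^ 2 / w i = 2 * (3 * (p i - q i) ^ 2 / (2 * (p i + 2 * q i))) := by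
          simp only [sq_abs, w]
          field_simp
      _ ≤ 2 * (p i * log (p i / q i) - p i + q i) := by
          gcongr
          exact three_mul_sq_sub_div_le_mul_log_div (hp.1 i) (hq₀ i)
  have hsum_KL : ∑ i, (p i * log (p i / q i) - p i + q i) = KL p q := by
    rw [sum_add_distrib, sum_sub_distrib, hp.2, hq.2, KL]
    ring
  have h := (sq_sum_div_le_sum_sq_div univ (fun i ↦ |p i - q i|) hw).trans (sum_le_sum hterm)
  rw [hsum_w, div_one, ← mul_sum, hsum_KL] at h
  rw [TV, mul_pow]
  linarith

end TotalVariation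

theorem sum_range_le_div_one_sub_of_le_mul {d : ℕ → ℝ} {α : ℝ} (hα₀ : 0 ≤ α) (hα₁ : α < 1)
    (hd₀ : 0 ≤ d 0) (hd : ∀ k, d (k + 1) ≤ α * d k) (s : ℕ) :
    ∑ k ∈ range s, d k ≤ d 0 / (1 - α) :=
  calc ∑ k ∈ range s, d k ≤ ∑ k ∈ range s, α ^ k * d 0 :=
        sum_le_sum fun k _ ↦ le_geom hα₀ k fun m _ ↦ hd m
    _ = (∑ k ∈ Ico 0 s, α ^ k) * d 0 := by rw [sum_mul, range_eq_Ico]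
    _ ≤ α ^ 0 / (1 - α) * d 0 :=
        mul_le_mul_of_nonneg_right (geom_sum_Ico_le_of_lt_one hα₀ hα₁) hd₀
    _ = d 0 / (1 - α) := by ring

theorem TV_le_of_contraction {ι : Type*} [Fintype ι] {p : ℕ → ι → ℝ} {α : ℝ} {t : ℕ}
    (hα₀ : 0 ≤ α) (hα₁ : α < 1)
    (hcontr : ∀ r ≥ t, TV (p (r + 1)) (p r) ≤ α * TV (p r) (p (r - 1))) (s : ℕ) :
    TV (p (t + s)) (p t) ≤ α / (1 - α) * TV (p t) (p (t - 1)) := by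
  set d : ℕ → ℝ := fun k ↦ TV (p (t + k + 1)) (p (t + k))
  have hd : ∀ k, d (k + 1) ≤ α * d k := fun k ↦ by
    simpa [d, add_assoc] using hcontr (t + k + 1) (by omega)
  calc TV (p (t + s)) (p t) ≤ ∑ k ∈ range s, d k := TV_le_sum_range (fun k ↦ p (t + k)) s
    _ ≤ d 0 / (1 - α) := sum_range_le_div_one_sub_of_le_mul hα₀ hα₁ (TV_nonneg _ _) hd s
    _ ≤ α * TV (p t) (p (t - 1)) / (1 - α) := by
        gcongr
        exact hcontr t le_rfl
    _ = α / (1 - α) * TV (p t) (p (t - 1)) := by ring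

theorem global_argmax_preservation_general
    {ι : Type*} [Fintype ι] [DecidableEq ι]
    (α δ : ℝ) (hα : α ∈ Set.Ico (0 : ℝ) 1)
    (Ω t : ℕ) (hΩ : 1 ≤ Ω) (ht : Ω ≤ t)
    (p : ℕ → ι → ℝ) (hprob : ∀ u, IsProbDist (p u)) (hpos : ∀ u i, 0 < p u i)
    (hKL : ∀ r ∈ Finset.Icc (t - Ω + 1) t, KL (p r) (p (r - 1)) ≤ δ)
    (hcontr : ∀ r ≥ t, TV (p (r + 1)) (p r) ≤ α * TV (p r) (p (r - 1)))
    (i : ι) (hne : (Finset.univ.erase i).Nonempty)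
    (hmargin : (Ω : ℝ) * Real.sqrt (δ / 2) + 1 / (1 - α) * Real.sqrt (δ / 2) <
      (p t i - (Finset.univ.erase i).sup' hne (p t)) / 2) :
    ∀ s : ℕ, ∀ j ≠ i, p (t + s) j < p (t + s) i := by
  obtain ⟨hα₀, hα₁⟩ := hα
  have hpinsker : TV (p t) (p (t - 1)) ≤ √(δ / 2) :=
    le_sqrt_of_sq_le ((TV_sq_le_half_KL (hprob t) (hprob (t - 1)) (hpos (t - 1))).trans
      (by linarith [hKL t (mem_Icc.2 ⟨by omega, le_rfl⟩)]))
  intro s j hj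
  have hdrift : TV (p (t + s)) (p t) ≤ 1 / (1 - α) * √(δ / 2) :=
    calc TV (p (t + s)) (p t) ≤ α / (1 - α) * TV (p t) (p (t - 1)) :=
          TV_le_of_contraction hα₀ hα₁ hcontr s
      _ ≤ 1 / (1 - α) * √(δ / 2) := by
          have : 0 < 1 - α := by linarith
          gcongr
          exact TV_nonneg _ _
  have hj_le : p t j ≤ (univ.erase i).sup' hne (p t) := le_sup' _ (mem_erase.2 ⟨hj, mem_univ j⟩)
  have hΩ_nonneg : 0 ≤ (Ω : ℝ) * √(δ / 2) := by positivity
  exact apply_lt_apply_of_two_mul_TV_lt hj (by linarith)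

/-- Global argmax preservation.
If `KL (p r) (p (r-1)) ≤ δ` on the window `{t−Ω+1, …, t}`, the one-step contraction
`TV (p (r+1)) (p r) ≤ α · TV (p r) (p (r-1))` holds for all `r ≥ t`, `i` is a strict
maximizer of `p t` with top-2 margin `m`, and `Ω·√(δ/2) + (1/(1−α))·√(δ/2) < m/2`,
then `i` is the unique maximizer of `p (t+s)` for every `s ≥ 0`. -/
theorem global_argmax_preservation
    {ι : Type*} [Fintype ι] [Nonempty ι] [DecidableEq ι]
    (α δ : ℝ) (hα : α ∈ Set.Ico (0 : ℝ) 1) (hδ : 0 ≤ δ)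
    (Ω t : ℕ) (hΩ : 1 ≤ Ω) (ht : Ω ≤ t)
    (p : ℕ → ι → ℝ) (hprob : ∀ u, IsProbDist (p u)) (hpos : ∀ u i, 0 < p u i)
    (hKL : ∀ r ∈ Finset.Icc (t - Ω + 1) t, KL (p r) (p (r - 1)) ≤ δ)
    (hcontr : ∀ r ≥ t, TV (p (r + 1)) (p r) ≤ α * TV (p r) (p (r - 1)))
    (i : ι) (hne : (Finset.univ.erase i).Nonempty)
    (hmax : ∀ j ≠ i, p t j < p t i)
    (hmargin : (Ω : ℝ) * Real.sqrt (δ / 2) + 1 / (1 - α) * Real.sqrt (δ / 2) <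
      (p t i - (Finset.univ.erase i).sup' hne (p t)) / 2) :
    ∀ s : ℕ, ∀ j ≠ i, p (t + s) j < p (t + s) i :=
  global_argmax_preservation_general α δ hα Ω t hΩ ht p hprob hpos hKL hcontr i hne hmargin
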